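/- The Borel hierarchy on Baire space is proper at every countable level: for every countable ordinal ξ ≥ 1, there is a Σ⁰_ξ subset of ℕ^ℕ that is not Π⁰_ξ. -/

import Mathlib

/-- The Σ⁰ classes of the Borel hierarchy on Baire space `ℕ → ℕ`:
`IsSigma 1 X` iff `X` is open; for `1 < ξ`, `IsSigma ξ X` iff `X` is a countable
union of sets each lying in `Π⁰_ζ` (i.e. with complement in `Σ⁰_ζ`) for some
`ζ < ξ`. -/
inductive IsSigma : Ordinal → Set (ℕ → ℕ) → Prop
  | open_ (X : Set (ℕ → ℕ)) (h : IsOpen X) : IsSigma 1 X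
  | union (ξ : Ordinal) (hξ : 1 < ξ) (A : ℕ → Set (ℕ → ℕ)) (ζ : ℕ → Ordinal)
      (hζ : ∀ n, ζ n < ξ) (h : ∀ n, IsSigma (ζ n) (A n)ᶜ) :
      IsSigma ξ (⋃ n, A n)

/-- The Π⁰ classes: complements of Σ⁰ sets. -/
def IsPi (ξ : Ordinal) (X : Set (ℕ → ℕ)) : Prop := IsSigma ξ Xᶜ

/-!
By induction on `ξ` there is a Σ⁰_ξ set `U ⊆ ℕ^ℕ ≅ ℕ^ℕ × ℕ^ℕ` whose sections `{x | (a, x) ∈ U}`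
are exactly the Σ⁰_ξ sets: at level `1` the code `a` lists indices in a countable basis, and
above level `1` the code is split into countably many codes of universal sets of lower levels.
By Cantor's diagonal argument, `{x | (x, x) ∈ U}` is then Σ⁰_ξ but not Π⁰_ξ.
-/

open Set Cardinal

def baireProdHomeomorph : (ℕ → ℕ) × (ℕ → ℕ) ≃ₜ (ℕ → ℕ) :=
  Homeomorph.sumArrowHomeomorphProdArrow.symm.trans
    (Homeomorph.piCongrLeft (Y := fun _ => ℕ) Equiv.natSumNatEquivNat)

def baireSeqHomeomorph : (ℕ → ℕ) ≃ₜ (ℕ → ℕ → ℕ) :=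
  (Homeomorph.piCongrLeft (Y := fun _ => ℕ) Nat.pairEquiv).symm.trans Homeomorph.piCurry

def baireSlice (U : Set (ℕ → ℕ)) (a : ℕ → ℕ) : Set (ℕ → ℕ) :=
  {x | baireProdHomeomorph (a, x) ∈ U}

def IsUniversalSigma (ξ : Ordinal) (U : Set (ℕ → ℕ)) : Prop :=
  IsSigma ξ U ∧ ∀ X, IsSigma ξ X → ∃ a, baireSlice U a = X

open Classical in
theorem TopologicalSpace.exists_seq_isOpen_forall_isOpen_eq_iUnion (α : Type*)
    [TopologicalSpace α] [SecondCountableTopology α] :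
    ∃ B : ℕ → Set α, (∀ k, IsOpen (B k)) ∧ ∀ X, IsOpen X → ∃ a : ℕ → ℕ, ⋃ n, B (a n) = X := by
  obtain ⟨b, hbc, -, hb⟩ := exists_countable_basis α
  obtain ⟨B, hB⟩ := (hbc.insert ∅).exists_eq_range (insert_nonempty ∅ b)
  have hB_mem : ∀ k, B k ∈ insert ∅ b := fun k => hB ▸ mem_range_self k
  obtain ⟨k₀, hk₀⟩ : ∅ ∈ range B := hB ▸ mem_insert ∅ b
  refine ⟨B, fun k => (hB_mem k).elim (· ▸ isOpen_empty) hb.isOpen, fun X hX => ?_⟩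
  refine ⟨fun n => if B n ⊆ X then n else k₀, Subset.antisymm ?_ fun x hx => ?_⟩
  · refine iUnion_subset fun n => ?_
    dsimp only
    split_ifs with h
    · exact h
    · simp [hk₀]
  · obtain ⟨t, htb, hxt, htX⟩ := hb.exists_subset_of_mem_open hx hX
    obtain ⟨n, rfl⟩ : t ∈ range B := hB ▸ mem_insert_of_mem ∅ htb
    exact mem_iUnion.2 ⟨n, by simpa [htX] using hxt⟩

theorem Ordinal.exists_range_eq_Ico_one {ξ : Ordinal} (h : 1 < ξ) (hξ : ξ.card ≤ ℵ₀) :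
    ∃ g : ℕ → Ordinal, range g = Ico 1 ξ := by
  have hIio : (Iio ξ).Countable := by
    rw [← le_aleph0_iff_set_countable, Cardinal.mk_Iio_ordinal]
    exact lift_le_aleph0.2 hξ
  obtain ⟨g, hg⟩ := (hIio.mono Ico_subset_Iio_self).exists_eq_range ⟨1, le_rfl, h⟩
  exact ⟨g, hg.symm⟩

namespace IsSigma

theorem one_le {ξ : Ordinal} {X : Set (ℕ → ℕ)} (h : IsSigma ξ X) : 1 ≤ ξ := by
  cases h with
  | open_ => exact le_rfl
  | union _ hξ => exact hξ.le

theorem isOpen {X : Set (ℕ → ℕ)} (h : IsSigma 1 X) : IsOpen X := by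
  cases h with
  | open_ _ h => exact h
  | union _ hξ => exact absurd hξ (lt_irrefl 1)

theorem preimage {ξ : Ordinal} {X : Set (ℕ → ℕ)} (hX : IsSigma ξ X)
    {f : (ℕ → ℕ) → ℕ → ℕ} (hf : Continuous f) : IsSigma ξ (f ⁻¹' X) := by
  induction hX with
  | open_ X h => exact .open_ _ (h.preimage hf)
  | union ξ hξ A ζ hζ _ ih =>
    rw [preimage_iUnion]
    exact .union ξ hξ _ ζ hζ fun n => preimage_compl (f := f) ▸ ih n

end IsSigma

theorem isSigma_univ {ξ : Ordinal} (h : 1 ≤ ξ) : IsSigma ξ univ := by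
  rcases h.eq_or_lt with rfl | h
  · exact .open_ _ isOpen_univ
  · have := IsSigma.union ξ h (fun _ => univ) (fun _ => 1) (fun _ => h)
      fun _ => by simpa using IsSigma.open_ ∅ isOpen_empty
    rwa [iUnion_const] at this

theorem IsSigma.exists_iUnion_eq {ξ : Ordinal} {X : Set (ℕ → ℕ)} (hX : IsSigma ξ X)
    (hξ : 1 < ξ) {g : ℕ → Ordinal} (hg : range g = Ico 1 ξ) :
    ∃ A : ℕ → Set (ℕ → ℕ), (∀ m, IsSigma (g m.unpair.1) (A m)ᶜ) ∧ ⋃ m, A m = X := by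
  cases hX with
  | open_ => exact absurd hξ (lt_irrefl 1)
  | union _ _ A ζ hζ hA =>
    choose k hk using fun n => hg.ge ⟨(hA n).one_le, hζ n⟩
    -- piece `Nat.pair k n` is `A n` when `g k` is its level, and `∅` otherwise
    refine ⟨fun m => if g m.unpair.1 = ζ m.unpair.2 then A m.unpair.2 else ∅, fun m => ?_,
      Subset.antisymm (iUnion_subset fun m => ?_) (iUnion_subset fun n => ?_)⟩
    · dsimp only
      split_ifs with h
      · exact h ▸ hA _
      · simpa using isSigma_univ (hg.le (mem_range_self _)).1
    · split_ifs
      · exact subset_iUnion _ _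
      · exact empty_subset _
    · refine (subset_of_eq ?_).trans (subset_iUnion _ (Nat.pair (k n) n))
      simp [hk n]

theorem exists_isUniversalSigma_one : ∃ U, IsUniversalSigma 1 U := by
  obtain ⟨B, hB, hB_univ⟩ :=
    TopologicalSpace.exists_seq_isOpen_forall_isOpen_eq_iUnion (ℕ → ℕ)
  set e := baireProdHomeomorph
  set U : Set (ℕ → ℕ) := {z | ∃ n, (e.symm z).2 ∈ B ((e.symm z).1 n)}
  have hU_eq : U = ⋃ n, ⋃ k, {z | (e.symm z).1 n = k} ∩ {z | (e.symm z).2 ∈ B k} := by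
    ext; simp [U]
  refine ⟨U, .open_ _ ?_, fun X hX => ?_⟩
  · rw [hU_eq]
    exact isOpen_iUnion fun n => isOpen_iUnion fun k =>
      ((isOpen_discrete {k}).preimage (by fun_prop)).inter ((hB k).preimage (by fun_prop))
  · obtain ⟨a, rfl⟩ := hB_univ X hX.isOpen
    exact ⟨a, by ext; simp [baireSlice, U, e]⟩

theorem exists_isUniversalSigma_of_one_lt {ξ : Ordinal} (hξ : 1 < ξ) {g : ℕ → Ordinal}
    (hg : range g = Ico 1 ξ) {V : ℕ → Set (ℕ → ℕ)}
    (hV : ∀ m, IsUniversalSigma (g m.unpair.1) (V m)) : ∃ U, IsUniversalSigma ξ U := by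
  set e := baireProdHomeomorph
  set f : ℕ → (ℕ → ℕ) → ℕ → ℕ :=
    fun m z => e (baireSeqHomeomorph (e.symm z).1 m, (e.symm z).2)
  have hslice : ∀ a, baireSlice (⋃ m, (f m ⁻¹' V m)ᶜ) a
      = ⋃ m, (baireSlice (V m) (baireSeqHomeomorph a m))ᶜ := by
    intro a; ext; simp [baireSlice, f, e]
  refine ⟨⋃ m, (f m ⁻¹' V m)ᶜ,
    .union ξ hξ _ (fun m => g m.unpair.1) (fun m => (hg.le (mem_range_self _)).2) fun m => ?_,
    fun X hX => ?_⟩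
  · rw [compl_compl]
    exact (hV m).1.preimage (by fun_prop)
  · obtain ⟨A, hA, rfl⟩ := hX.exists_iUnion_eq hξ hg
    choose c hc using fun m => (hV m).2 _ (hA m)
    exact ⟨baireSeqHomeomorph.symm c, by simp [hslice, hc]⟩

theorem exists_isUniversalSigma {ξ : Ordinal} (h1 : 1 ≤ ξ) (hξ : ξ.card ≤ ℵ₀) :
    ∃ U, IsUniversalSigma ξ U := by
  induction ξ using WellFoundedLT.induction with
  | _ ξ ih =>
  rcases h1.eq_or_lt with rfl | hlt
  · exact exists_isUniversalSigma_one
  obtain ⟨g, hg⟩ := Ordinal.exists_range_eq_Ico_one hlt hξ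
  have hg_mem : ∀ k, g k ∈ Ico 1 ξ := fun k => hg ▸ mem_range_self k
  choose V hV using fun m : ℕ => ih _ (hg_mem m.unpair.1).2 (hg_mem m.unpair.1).1
    ((Ordinal.card_le_card (hg_mem m.unpair.1).2.le).trans hξ)
  exact exists_isUniversalSigma_of_one_lt hlt hg hV

theorem IsUniversalSigma.exists_isSigma_not_isPi {ξ : Ordinal} {U : Set (ℕ → ℕ)}
    (hU : IsUniversalSigma ξ U) : ∃ X, IsSigma ξ X ∧ ¬ IsPi ξ X := by
  refine ⟨{x | x ∈ baireSlice U x}, hU.1.preimage (by fun_prop), fun hPi => ?_⟩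
  obtain ⟨a, ha⟩ := hU.2 _ hPi
  exact iff_not_self (Set.ext_iff.1 ha a)

/-- The Borel hierarchy on Baire space is proper at every countable level `ξ ≥ 1`. -/
theorem borel_hierarchy_proper (ξ : Ordinal) (h1 : 1 ≤ ξ)
    (hξ : ξ.card ≤ Cardinal.aleph0) :
    ∃ X : Set (ℕ → ℕ), IsSigma ξ X ∧ ¬ IsPi ξ X := by
  obtain ⟨U, hU⟩ := exists_isUniversalSigma h1 hξ
  exact hU.exists_isSigma_not_isPi
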